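/- arXiv:quant-ph/0702116 — 3 statements merged into one kernel-verified Lean document; each statement's English description precedes it below -/
import Mathlib

section
/- For every natural number N ≥ 2, the maximal product overlap of the W state equals π(W_N) = ((N−1)/N)^(N−1), and this supremum is attained by some product unit state; equivalently, the geometric measure of entanglement of the W state is E_g(W_N) = (N−1)·log₂(N/(N−1)). -/
set_option maxHeartbeats 1000000


open scoped BigOperators Classical

noncomputable section

/-- The inner product `⟨φ, ψ⟩ = Σ_x conj(φ x) · ψ x` of two `n`-qubit amplitude functions. -/
def qInner {n : ℕ} (φ ψ : (Fin n → Bool) → ℂ) : ℂ :=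
  ∑ x : Fin n → Bool, (starRingEnd ℂ) (φ x) * ψ x

/-- A product state: `φ x = ∏ i, f i (x i)` for some `f i : Bool → ℂ`. -/
def IsProductState {n : ℕ} (φ : (Fin n → Bool) → ℂ) : Prop :=
  ∃ f : Fin n → Bool → ℂ, ∀ x, φ x = ∏ i, f i (x i)

/-- Normalization: `Σ_x ‖φ x‖² = 1`. -/
def IsNormalized {n : ℕ} (φ : (Fin n → Bool) → ℂ) : Prop :=
  ∑ x : Fin n → Bool, ‖φ x‖ ^ 2 = 1

/-- The maximal product overlap `π(ψ)`. -/
def maxOverlap {n : ℕ} (ψ : (Fin n → Bool) → ℂ) : ℝ :=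
  sSup { r : ℝ | ∃ φ : (Fin n → Bool) → ℂ,
    IsProductState φ ∧ IsNormalized φ ∧ r = ‖qInner φ ψ‖ ^ 2 }

/-- The geometric measure of entanglement `E_g(ψ) = −log₂ π(ψ)`. -/
def geomMeasure {n : ℕ} (ψ : (Fin n → Bool) → ℂ) : ℝ :=
  - Real.logb 2 (maxOverlap ψ)

/-- The `N`-qubit W state: amplitude `1/√N` on strings with exactly one `true`. -/
def Wstate (N : ℕ) : (Fin N → Bool) → ℂ :=
  fun x => if (Finset.univ.filter fun i => x i = true).card = 1
    then 1 / (Real.sqrt N : ℂ) else 0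


open Finset in

/-- Core AM-GM: `(k+1)^(k+1) * u^k * v ≤ (k*u + v)^(k+1)` for nonneg `u v`. -/
lemma core_amgm (k : ℕ) {u v : ℝ} (hu : 0 ≤ u) (hv : 0 ≤ v) :
    ((k : ℝ) + 1) ^ (k + 1) * (u ^ k * v) ≤ ((k : ℝ) * u + v) ^ (k + 1) := by
  rcases Nat.eq_zero_or_pos k with rfl | hk
  · simp
  have hk1 : (0:ℝ) < (k:ℝ) + 1 := by positivity
  have hw : (k : ℝ) / ((k:ℝ)+1) + 1 / ((k:ℝ)+1) = 1 := by field_simp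
  have h := Real.geom_mean_le_arith_mean2_weighted
    (by positivity : (0:ℝ) ≤ (k:ℝ)/((k:ℝ)+1)) (by positivity : (0:ℝ) ≤ 1/((k:ℝ)+1)) hu hv hw
  -- raise to power (k+1)
  have hL : (0:ℝ) ≤ u ^ ((k:ℝ)/((k:ℝ)+1)) * v ^ (1/((k:ℝ)+1)) := by positivity
  have h2 := pow_le_pow_left₀ hL h (k+1)
  have hLpow : (u ^ ((k:ℝ)/((k:ℝ)+1)) * v ^ (1/((k:ℝ)+1))) ^ (k+1) = u ^ k * v := by
    rw [mul_pow, ← Real.rpow_natCast (u ^ ((k:ℝ)/((k:ℝ)+1))) (k+1),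
      ← Real.rpow_natCast (v ^ (1/((k:ℝ)+1))) (k+1),
      ← Real.rpow_mul hu, ← Real.rpow_mul hv]
    push_cast
    rw [div_mul_cancel₀ _ (ne_of_gt hk1), one_div, inv_mul_cancel₀ (ne_of_gt hk1)]
    rw [Real.rpow_natCast, Real.rpow_one]
  rw [hLpow] at h2
  calc ((k : ℝ) + 1) ^ (k + 1) * (u ^ k * v)
      ≤ ((k : ℝ) + 1) ^ (k + 1) * ((k:ℝ)/((k:ℝ)+1) * u + 1/((k:ℝ)+1) * v) ^ (k+1) := by
        apply mul_le_mul_of_nonneg_left h2 (by positivity)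
    _ = ((k : ℝ) * u + v) ^ (k + 1) := by
        rw [← mul_pow]
        congr 1
        field_simp

open Finset in
lemma esymm_bounds {ι : Type*} [DecidableEq ι] (y : ι → ℝ) (s : Finset ι) (hs : s.Nonempty)
    (hy : ∀ i ∈ s, 0 ≤ y i) :
    ((s.card : ℝ) ^ s.card * ∏ i ∈ s, y i ≤ (∑ i ∈ s, y i) ^ s.card) ∧
    ((s.card : ℝ) ^ (s.card - 1) * ∑ j ∈ s, ∏ i ∈ s.erase j, y i
       ≤ (s.card : ℝ) * (∑ i ∈ s, y i) ^ (s.card - 1)) := by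
  induction hs using Finset.Nonempty.cons_induction with
  | singleton a => simp
  | cons a s' ha hs' IH =>
    have hya : 0 ≤ y a := hy a (mem_cons_self a s')
    have hy' : ∀ i ∈ s', 0 ≤ y i := fun i hi => hy i (mem_cons.2 (Or.inr hi))
    obtain ⟨IH1, IH2⟩ := IH hy'
    obtain ⟨m', hcard⟩ : ∃ m', s'.card = m' + 1 :=
      ⟨s'.card - 1, (Nat.succ_pred_eq_of_pos (card_pos.2 hs')).symm⟩
    set q : ℝ := y a with hq
    set S' : ℝ := ∑ i ∈ s', y i with hS'
    set P' : ℝ := ∏ i ∈ s', y i with hP'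
    set E' : ℝ := ∑ j ∈ s', ∏ i ∈ s'.erase j, y i with hE'
    have hS'0 : 0 ≤ S' := Finset.sum_nonneg hy'
    have hP'0 : 0 ≤ P' := Finset.prod_nonneg hy'
    have hE'0 : 0 ≤ E' := Finset.sum_nonneg fun j hj =>
      Finset.prod_nonneg fun i hi => hy' i (mem_of_mem_erase hi)
    -- split the erase-sum over the cons
    have hEsplit : ∑ j ∈ cons a s' ha, ∏ i ∈ (cons a s' ha).erase j, y i
        = P' + q * E' := by
      rw [sum_cons, erase_cons]
      congr 1
      rw [hE', mul_sum]
      refine Finset.sum_congr rfl fun j hj => ?_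
      rw [erase_cons_of_ne ha (ne_of_mem_of_not_mem hj ha).symm, prod_cons]
    rw [card_cons, sum_cons, prod_cons, hEsplit, hcard]
    rw [hcard] at IH1 IH2
    simp only [Nat.add_sub_cancel] at IH2 ⊢
    push_cast
    push_cast at IH1 IH2
    rw [← hq, ← hS']
    constructor
    · -- (m'+2)^(m'+2) * (q * P') ≤ (q + S')^(m'+2)
      have key := core_amgm (m'+1) (u := S') (v := ((m':ℝ)+1)*q) hS'0 (by positivity)
      push_cast at key
      have key' : ((m':ℝ)+1+1)^(m'+1+1) * (S' ^ (m'+1) * (((m':ℝ)+1)*q))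
          ≤ ((m':ℝ)+1)^(m'+1+1) * (S' + q)^(m'+1+1) := by
        calc ((m':ℝ)+1+1)^(m'+1+1) * (S' ^ (m'+1) * (((m':ℝ)+1)*q))
            ≤ (((m':ℝ)+1) * S' + ((m':ℝ)+1)*q)^(m'+1+1) := key
          _ = (((m':ℝ)+1) * (S' + q))^(m'+1+1) := by ring_nf
          _ = ((m':ℝ)+1)^(m'+1+1) * (S' + q)^(m'+1+1) := by rw [mul_pow]
      have c1 : (0:ℝ) < ((m':ℝ)+1)^(m'+1+1) := by positivity
      refine le_of_mul_le_mul_left ?_ c1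
      calc ((m':ℝ)+1)^(m'+1+1) * (((m':ℝ)+1+1)^(m'+1+1) * (q * P'))
          = (((m':ℝ)+1)^(m'+1) * P') * (((m':ℝ)+1+1)^(m'+1+1) * q * (((m':ℝ)+1))) := by
            rw [pow_succ ((m':ℝ)+1) (m'+1)]; ring
        _ ≤ (S' ^ (m'+1)) * (((m':ℝ)+1+1)^(m'+1+1) * q * (((m':ℝ)+1))) := by
            apply mul_le_mul_of_nonneg_right IH1 (by positivity)
        _ = ((m':ℝ)+1+1)^(m'+1+1) * (S' ^ (m'+1) * (((m':ℝ)+1)*q)) := by ring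
        _ ≤ ((m':ℝ)+1)^(m'+1+1) * (S' + q)^(m'+1+1) := key'
        _ = ((m':ℝ)+1)^(m'+1+1) * (q + S')^(m'+1+1) := by ring_nf
    · -- (m'+2)^(m'+1) * (P' + q * E') ≤ (m'+2) * (q + S')^(m'+1)
      have key := core_amgm m' (u := ((m':ℝ)+1+1) * S')
        (v := ((m':ℝ)+1)^2 * q + S') (by positivity) (by positivity)
      -- key : (m'+1)^(m'+1) * ((((m'+2)) S')^m' * ((m'+1)^2 q + S')) ≤ (m' * ((m'+2) S') + ((m'+1)^2 q + S'))^(m'+1)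
      have hrhs : (m':ℝ) * (((m':ℝ)+1+1) * S') + (((m':ℝ)+1)^2 * q + S')
          = (((m':ℝ)+1)^2) * (S' + q) := by ring
      rw [hrhs] at key
      -- key : (m'+1)^(m'+1) * ((m'+2)^m' * S'^m' * ((m'+1)^2 q + S')) ≤ ((m'+1)^(2*(m'+1))) * (S'+q)^(m'+1)
      -- IH2 : (m'+1)^m' * E' ≤ (m'+1) * S'^m'
      -- IH1 : (m'+1)^(m'+1) * P' ≤ S'^(m'+1)
      have c1 : (0:ℝ) < ((m':ℝ)+1)^(m'+1) := by positivity
      refine le_of_mul_le_mul_left ?_ c1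
      calc ((m':ℝ)+1)^(m'+1) * (((m':ℝ)+1+1)^(m'+1) * (P' + q * E'))
          = ((m':ℝ)+1+1)^(m'+1) * ((((m':ℝ)+1)^(m'+1) * P')
              + (((m':ℝ)+1)^m' * E') * (((m':ℝ)+1) * q)) := by
            rw [pow_succ ((m':ℝ)+1) m']; ring
        _ ≤ ((m':ℝ)+1+1)^(m'+1) * ((S'^(m'+1)) + (((m':ℝ)+1) * S'^m') * (((m':ℝ)+1) * q)) := by
            apply mul_le_mul_of_nonneg_left _ (by positivity)
            have h2 : (((m':ℝ)+1)^m' * E') * (((m':ℝ)+1) * q)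
                ≤ (((m':ℝ)+1) * S'^m') * (((m':ℝ)+1) * q) :=
              mul_le_mul_of_nonneg_right IH2 (by positivity)
            exact add_le_add IH1 h2
        _ = (((m':ℝ)+1+1) * (((m':ℝ)+1+1)^m' * S'^m' * (((m':ℝ)+1)^2 * q + S'))) := by
            rw [pow_succ ((m':ℝ)+1+1) m', pow_succ S' m']; ring
        _ ≤ ((m':ℝ)+1+1) * ((((m':ℝ)+1)^2 * (S'+q))^(m'+1) / ((m':ℝ)+1)^(m'+1)) := by
            apply mul_le_mul_of_nonneg_left _ (by positivity)
            rw [le_div_iff₀ (by positivity)]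
            calc ((m':ℝ)+1+1)^m' * S'^m' * (((m':ℝ)+1)^2 * q + S') * ((m':ℝ)+1)^(m'+1)
                = ((m':ℝ)+1)^(m'+1) * ((((m':ℝ)+1+1) * S')^m' * (((m':ℝ)+1)^2 * q + S')) := by
                  rw [mul_pow]; ring
              _ ≤ (((m':ℝ)+1)^2 * (S'+q))^(m'+1) := key
        _ = ((m':ℝ)+1)^(m'+1) * (((m':ℝ)+1+1) * (q + S')^(m'+1)) := by
            rw [mul_pow (((m':ℝ)+1)^2) (S'+q) (m'+1), ← pow_mul, two_mul, pow_add]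
            field_simp
            ring

open Finset in
/-- Sum over all boolean strings of a product factorizes. -/
lemma sum_prod_bool {n : ℕ} (g : Fin n → Bool → ℝ) :
    ∑ x : Fin n → Bool, ∏ i, g i (x i) = ∏ i, (g i false + g i true) := by
  have h := Finset.prod_univ_sum (fun _ : Fin n => (Finset.univ : Finset Bool))
    (fun i b => g i b)
  rw [Fintype.piFinset_univ] at h
  rw [← h]
  refine Finset.prod_congr rfl fun i _ => ?_
  simp [Fintype.sum_bool, add_comm]

/-- The basis string with a single `true` at `j`. -/
def eW {N : ℕ} (j : Fin N) : Fin N → Bool := fun i => if i = j then true else false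

lemma eW_filter {N : ℕ} (j : Fin N) :
    (Finset.univ.filter fun i => eW j i = true) = {j} := by
  ext i
  simp only [Finset.mem_filter, Finset.mem_univ, true_and, Finset.mem_singleton, eW]
  constructor
  · intro h
    by_contra hne
    simp [hne] at h
  · intro h
    simp [h]

lemma sum_W_support {N : ℕ} {β : Type*} [AddCommMonoid β] (F : (Fin N → Bool) → β) :
    ∑ x ∈ Finset.univ.filter
        (fun x : Fin N → Bool => (Finset.univ.filter fun i => x i = true).card = 1), F x
      = ∑ j : Fin N, F (eW j) := by
  have himg : Finset.univ.filter
      (fun x : Fin N → Bool => (Finset.univ.filter fun i => x i = true).card = 1)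
      = Finset.univ.image eW := by
    ext x
    simp only [Finset.mem_filter, Finset.mem_univ, true_and, Finset.mem_image]
    constructor
    · intro h
      obtain ⟨a, ha⟩ := Finset.card_eq_one.mp h
      refine ⟨a, ?_⟩
      funext i
      have hiff : x i = true ↔ i = a := by
        rw [show (i = a) ↔ i ∈ ({a} : Finset (Fin N)) by simp, ← ha]
        simp
      rcases eq_or_ne i a with rfl | hne
      · simp [eW, hiff.mpr rfl]
      · have : x i ≠ true := fun hx => hne (hiff.mp hx)
        simp [eW, hne, Bool.not_eq_true] at this ⊢
        exact this
    · rintro ⟨j, rfl⟩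
      rw [eW_filter]
      simp
  rw [himg]
  rw [Finset.sum_image]
  intro i _ j _ hij
  have h1 : eW i i = eW (N := N) j i := by rw [hij]
  simp only [eW, if_pos rfl] at h1
  by_contra hne
  rw [if_neg hne] at h1
  exact Bool.true_eq_false.mp h1

lemma prod_eW {N : ℕ} {M : Type*} [CommMonoid M] (f : Fin N → Bool → M) (j : Fin N) :
    ∏ i, f i (eW j i) = f j true * ∏ i ∈ Finset.univ.erase j, f i false := by
  rw [← Finset.mul_prod_erase Finset.univ _ (Finset.mem_univ j)]
  congr 1
  · simp [eW]
  · refine Finset.prod_congr rfl fun i hi => ?_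
    simp [eW, Finset.ne_of_mem_erase hi]

open Finset in
lemma key_bound (N : ℕ) (hN : 2 ≤ N) (v : Fin N → ℝ × ℝ)
    (hv : ∀ j, 0 ≤ (v j).1 ∧ 0 ≤ (v j).2 ∧ (v j).1 ^ 2 + (v j).2 ^ 2 = 1) :
    (∑ j, (v j).2 * ∏ i ∈ Finset.univ.erase j, (v i).1) ^ 2
      ≤ N * (((N : ℝ) - 1) / N) ^ (N - 1) := by
  have hNpos : (0:ℝ) < N := by positivity
  have hN1 : (0:ℝ) ≤ (N:ℝ) - 1 := by
    have : (2:ℝ) ≤ N := by exact_mod_cast hN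
    linarith
  have hCnonneg : (0:ℝ) ≤ N * (((N : ℝ) - 1) / N) ^ (N - 1) := by positivity
  set K : Set (ℝ × ℝ) := {p | 0 ≤ p.1 ∧ 0 ≤ p.2 ∧ p.1 ^ 2 + p.2 ^ 2 = 1} with hK
  set D : Set (Fin N → ℝ × ℝ) := Set.univ.pi fun _ => K with hD
  set H : (Fin N → ℝ × ℝ) → ℝ :=
    fun w => ∑ j, (w j).2 * ∏ i ∈ Finset.univ.erase j, (w i).1 with hH
  have hKc : IsCompact K := by
    have hcl : IsClosed K := by
      have : K = {p : ℝ×ℝ | 0 ≤ p.1} ∩ ({p | 0 ≤ p.2} ∩ {p | p.1^2 + p.2^2 = 1}) := rfl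
      rw [this]
      exact (isClosed_le continuous_const continuous_fst).inter
        ((isClosed_le continuous_const continuous_snd).inter
          (isClosed_eq (by fun_prop) continuous_const))
    refine IsCompact.of_isClosed_subset
      (isCompact_Icc (a := ((0:ℝ),(0:ℝ))) (b := ((1:ℝ),(1:ℝ)))) hcl ?_
    rintro ⟨x, z⟩ ⟨h1, h2, h3⟩
    simp only [Set.mem_Icc, Prod.le_def] at *
    refine ⟨⟨h1, h2⟩, ⟨by nlinarith, by nlinarith⟩⟩
  have hDc : IsCompact D := isCompact_univ_pi fun _ => hKc
  have hDne : D.Nonempty := ⟨fun _ => (1, 0), fun j _ => ⟨zero_le_one, le_refl 0, by norm_num⟩⟩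
  have hHc : Continuous H := by
    apply continuous_finset_sum
    intro j _
    exact ((continuous_apply j).snd).mul
      (continuous_finset_prod _ fun i _ => (continuous_apply i).fst)
  obtain ⟨w, hwD, hmax⟩ := hDc.exists_isMaxOn hDne hHc.continuousOn
  set M := H w with hM
  have hvD : v ∈ D := fun j _ => hv j
  have hwK : ∀ j, w j ∈ K := fun j => hwD j (Set.mem_univ j)
  have hHv_le : H v ≤ M := hmax hvD
  have hHv0 : 0 ≤ H v := Finset.sum_nonneg fun j _ =>
    mul_nonneg (hv j).2.1 (Finset.prod_nonneg fun i _ => (hv i).1)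
  show (H v) ^ 2 ≤ _
  rcases le_or_gt M 0 with hM0 | hM0
  · have : H v = 0 := le_antisymm (hHv_le.trans hM0) hHv0
    rw [this]
    simpa using hCnonneg
  -- main case : 0 < M
  have hgoal : M ^ 2 ≤ ↑N * (((N : ℝ) - 1) / ↑N) ^ (N - 1) →
      (H v) ^ 2 ≤ ↑N * (((N : ℝ) - 1) / ↑N) ^ (N - 1) := by
    intro h
    exact le_trans (pow_le_pow_left₀ hHv0 hHv_le 2) h
  apply hgoal
  set a : Fin N → ℝ := fun j => (w j).1 with haa
  set b : Fin N → ℝ := fun j => (w j).2 with hbb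
  have ha0 : ∀ j, 0 ≤ a j := fun j => (hwK j).1
  have hb0 : ∀ j, 0 ≤ b j := fun j => (hwK j).2.1
  have hab : ∀ j, a j ^ 2 + b j ^ 2 = 1 := fun j => (hwK j).2.2
  set Y : Fin N → ℝ := fun j => ∏ i ∈ Finset.univ.erase j, a i with hYY
  set X : Fin N → ℝ := fun j =>
    ∑ k ∈ Finset.univ.erase j, b k * ∏ i ∈ (Finset.univ.erase j).erase k, a i with hXX
  have hX0 : ∀ j, 0 ≤ X j := fun j => Finset.sum_nonneg fun k _ =>
    mul_nonneg (hb0 k) (Finset.prod_nonneg fun i _ => ha0 i)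
  have hY0 : ∀ j, 0 ≤ Y j := fun j => Finset.prod_nonneg fun i _ => ha0 i
  -- decomposition of H
  have hdecomp : ∀ (u : Fin N → ℝ × ℝ) (j : Fin N),
      H u = (u j).1 * (∑ k ∈ Finset.univ.erase j, (u k).2 *
              ∏ i ∈ (Finset.univ.erase j).erase k, (u i).1)
            + (u j).2 * ∏ i ∈ Finset.univ.erase j, (u i).1 := by
    intro u j
    simp only [hH]
    rw [← Finset.add_sum_erase Finset.univ _ (Finset.mem_univ j), add_comm]
    congr 1
    rw [Finset.mul_sum]
    refine Finset.sum_congr rfl fun k hk => ?_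
    have hjk : j ∈ Finset.univ.erase k :=
      Finset.mem_erase.2 ⟨(Finset.ne_of_mem_erase hk).symm, Finset.mem_univ j⟩
    rw [← Finset.mul_prod_erase (Finset.univ.erase k) _ hjk, Finset.erase_right_comm]
    ring
  -- maximality against coordinate updates
  have hmaxj : ∀ (j : Fin N), ∀ p ∈ K, p.1 * X j + p.2 * Y j ≤ M := by
    intro j p hp
    have hupd : Function.update w j p ∈ D := by
      intro i _
      rcases eq_or_ne i j with rfl | hij
      · rwa [Function.update_self]
      · rw [Function.update_of_ne hij]; exact hwK i
    have h1 : H (Function.update w j p) ≤ M := hmax hupd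
    rw [hdecomp (Function.update w j p) j, Function.update_self] at h1
    have hXu : (∑ k ∈ Finset.univ.erase j, (Function.update w j p k).2 *
        ∏ i ∈ (Finset.univ.erase j).erase k, (Function.update w j p i).1) = X j := by
      refine Finset.sum_congr rfl fun k hk => ?_
      rw [Function.update_of_ne (Finset.ne_of_mem_erase hk)]
      congr 1
      refine Finset.prod_congr rfl fun i hi => ?_
      rw [Function.update_of_ne (Finset.ne_of_mem_erase (Finset.mem_of_mem_erase hi))]
    have hYu : (∏ i ∈ Finset.univ.erase j, (Function.update w j p i).1) = Y j := by
      refine Finset.prod_congr rfl fun i hi => ?_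
      rw [Function.update_of_ne (Finset.ne_of_mem_erase hi)]
    rw [hXu, hYu] at h1
    exact h1
  -- every coordinate satisfies the eigen equations
  have hMXY : ∀ j, M = a j * X j + b j * Y j := by
    intro j
    rw [hM, hdecomp w j]
  have hYbM : ∀ j, Y j = b j * M := by
    intro j
    -- first : X j ^2 + Y j ^2 = M ^2
    have hr2 : X j ^ 2 + Y j ^ 2 = M ^ 2 := by
      set r : ℝ := Real.sqrt (X j ^ 2 + Y j ^ 2) with hr
      have hr2' : r ^ 2 = X j ^ 2 + Y j ^ 2 := Real.sq_sqrt (by positivity)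
      have hrpos : 0 < r := by
        rcases eq_or_lt_of_le (Real.sqrt_nonneg (X j ^ 2 + Y j ^ 2)) with h0 | h
        · exfalso
          have hXY : X j ^ 2 + Y j ^ 2 = 0 := by rw [← hr2', hr, ← h0]; norm_num
          have hX : X j = 0 := by nlinarith [sq_nonneg (X j), sq_nonneg (Y j)]
          have hYj : Y j = 0 := by nlinarith [sq_nonneg (X j), sq_nonneg (Y j)]
          have : M = 0 := by rw [hMXY j, hX, hYj]; ring
          linarith
        · exact h
      -- M ≤ r  (Cauchy-Schwarz)
      have hMr : M ≤ r := by
        have hcs : M ^ 2 ≤ r ^ 2 := by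
          rw [hr2']
          have := hab j
          nlinarith [sq_nonneg (a j * Y j - b j * X j), hMXY j]
        nlinarith
      -- r ≤ M
      have hrM : r ≤ M := by
        have hmem : ((X j / r, Y j / r) : ℝ × ℝ) ∈ K := by
          refine ⟨div_nonneg (hX0 j) hrpos.le, div_nonneg (hY0 j) hrpos.le, ?_⟩
          show (X j / r) ^ 2 + (Y j / r) ^ 2 = 1
          rw [div_pow, div_pow, ← add_div, ← hr2', div_self (pow_pos hrpos 2).ne']
        have h2 := hmaxj j _ hmem
        have heqv : (X j / r) * X j + (Y j / r) * Y j = r := by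
          rw [div_mul_eq_mul_div, div_mul_eq_mul_div, ← add_div,
            ← pow_two, ← pow_two, ← hr2', pow_two, mul_div_assoc,
            div_self hrpos.ne', mul_one]
        rwa [heqv] at h2
      have : r = M := le_antisymm hrM hMr
      rw [← this, hr2']
    -- equality in Cauchy-Schwarz
    have heq : a j * Y j = b j * X j := by
      have hM' : a j * X j + b j * Y j = M := (hMXY j).symm
      have h0 : (a j * Y j - b j * X j) ^ 2 = 0 := by
        linear_combination (X j ^ 2 + Y j ^ 2) * hab j + hr2
          - (a j * X j + b j * Y j + M) * hM'
      have := sq_eq_zero_iff.mp h0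
      linarith
    linear_combination (-(Y j)) * hab j + (-(b j)) * hMXY j + (a j) * heq
  -- sum of b squared equals one
  have hsumY : M = (∑ j, (b j) ^ 2) * M := by
    have h1 : M = ∑ j, b j * Y j := hM
    calc M = ∑ j, b j * Y j := h1
      _ = ∑ j, (b j) ^ 2 * M := by
          refine Finset.sum_congr rfl fun j _ => ?_
          rw [hYbM j]; ring
      _ = (∑ j, (b j) ^ 2) * M := by rw [← Finset.sum_mul]
  have hsumb : ∑ j, (b j) ^ 2 = 1 :=
    mul_right_cancel₀ (ne_of_gt hM0) (by rw [one_mul, ← hsumY])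
  -- M² as sum of products
  set y : Fin N → ℝ := fun i => (a i) ^ 2 with hyy
  have hM2 : M ^ 2 = ∑ j, ∏ i ∈ Finset.univ.erase j, y i := by
    have h1 : ∀ j, ∏ i ∈ Finset.univ.erase j, y i = (Y j) ^ 2 := by
      intro j
      rw [hYY]
      simp only [hyy]
      rw [← Finset.prod_pow]
    calc M ^ 2 = ∑ j, (b j) ^ 2 * M ^ 2 := by
          rw [← Finset.sum_mul, hsumb, one_mul]
      _ = ∑ j, ∏ i ∈ Finset.univ.erase j, y i := by
          refine Finset.sum_congr rfl fun j _ => ?_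
          rw [h1 j, hYbM j]; ring
  have hsumy : ∑ i, y i = (N : ℝ) - 1 := by
    have h1 : ∀ i, y i = 1 - (b i) ^ 2 := by
      intro i
      have := hab i
      simp only [hyy]
      linarith
    calc ∑ i, y i = ∑ i : Fin N, (1 - (b i) ^ 2) := Finset.sum_congr rfl fun i _ => h1 i
      _ = (N : ℝ) - 1 := by
          rw [Finset.sum_sub_distrib, hsumb]
          simp
  -- apply the Maclaurin-type bound
  have huniv : (Finset.univ : Finset (Fin N)).Nonempty := by
    have : 0 < N := by omega
    exact ⟨⟨0, this⟩, Finset.mem_univ _⟩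
  have hcard : (Finset.univ : Finset (Fin N)).card = N := by simp
  obtain ⟨-, hmac⟩ := esymm_bounds y Finset.univ huniv (fun i _ => sq_nonneg (a i))
  rw [hcard, hsumy, ← hM2] at hmac
  -- hmac : (N:ℝ)^(N-1) * M^2 ≤ N * ((N:ℝ)-1)^(N-1)
  have hfinal : ↑N * (((N : ℝ) - 1) / ↑N) ^ (N - 1) = ↑N * ((N:ℝ)-1)^(N-1) / (N:ℝ)^(N-1) := by
    rw [div_pow]; ring
  rw [hfinal, le_div_iff₀ (by positivity)]
  nlinarith [hmac]

open Finset in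
-- new material:
lemma qInner_W_eq {N : ℕ} (φ : (Fin N → Bool) → ℂ) :
    qInner φ (Wstate N)
      = ∑ j : Fin N, (starRingEnd ℂ) (φ (eW j)) * (1 / (Real.sqrt N : ℂ)) := by
  unfold qInner Wstate
  rw [← sum_W_support (fun x => (starRingEnd ℂ) (φ x) * (1 / (Real.sqrt N : ℂ))),
    Finset.sum_filter]
  refine Finset.sum_congr rfl fun x _ => ?_
  simp only [mul_ite, mul_zero]

lemma overlap_le (N : ℕ) (hN : 2 ≤ N) (φ : (Fin N → Bool) → ℂ)
    (hprod : IsProductState φ) (hnorm : IsNormalized φ) :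
    ‖qInner φ (Wstate N)‖ ^ 2 ≤ (((N : ℝ) - 1) / N) ^ (N - 1) := by
  have hNpos : (0:ℝ) < N := by positivity
  obtain ⟨f, hf⟩ := hprod
  set u : Fin N → ℝ := fun i => ‖f i false‖ with hu
  set t : Fin N → ℝ := fun i => ‖f i true‖ with ht
  have hu0 : ∀ i, 0 ≤ u i := fun i => norm_nonneg _
  have ht0 : ∀ i, 0 ≤ t i := fun i => norm_nonneg _
  -- normalization gives product of squares equal to 1
  have hnp : ∏ i, (u i ^ 2 + t i ^ 2) = 1 := by
    have h1 : ∀ x : Fin N → Bool, ‖φ x‖ ^ 2 = ∏ i, ‖f i (x i)‖ ^ 2 := by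
      intro x
      rw [hf x, norm_prod, ← Finset.prod_pow]
    have h2 := hnorm
    unfold IsNormalized at h2
    rw [Finset.sum_congr rfl (fun x _ => h1 x),
      sum_prod_bool (fun i b => ‖f i b‖ ^ 2)] at h2
    exact h2
  have hpos : ∀ i, 0 < u i ^ 2 + t i ^ 2 := by
    intro i
    rcases lt_or_eq_of_le (by positivity : (0:ℝ) ≤ u i ^ 2 + t i ^ 2) with h | h
    · exact h
    · exfalso
      rw [Finset.prod_eq_zero (Finset.mem_univ i) h.symm] at hnp
      norm_num at hnp
  set n : Fin N → ℝ := fun i => Real.sqrt (u i ^ 2 + t i ^ 2) with hn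
  have hnpos : ∀ i, 0 < n i := fun i => Real.sqrt_pos.2 (hpos i)
  have hn2 : ∀ i, n i ^ 2 = u i ^ 2 + t i ^ 2 := fun i => Real.sq_sqrt (hpos i).le
  have hprodn : ∏ i, n i = 1 := by
    have h2 : (∏ i, n i) ^ 2 = 1 := by
      rw [← Finset.prod_pow, Finset.prod_congr rfl fun i _ => hn2 i, hnp]
    have h3 : (∏ i, n i - 1) * (∏ i, n i + 1) = 0 := by linear_combination h2
    rcases mul_eq_zero.mp h3 with h | h
    · linarith
    · have : (0:ℝ) < ∏ i, n i := Finset.prod_pos fun i _ => hnpos i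
      linarith
  -- apply the key bound
  set v : Fin N → ℝ × ℝ := fun i => (u i / n i, t i / n i) with hv
  have hvK : ∀ j, 0 ≤ (v j).1 ∧ 0 ≤ (v j).2 ∧ (v j).1 ^ 2 + (v j).2 ^ 2 = 1 := by
    intro j
    refine ⟨div_nonneg (hu0 j) (hnpos j).le, div_nonneg (ht0 j) (hnpos j).le, ?_⟩
    show (u j / n j) ^ 2 + (t j / n j) ^ 2 = 1
    rw [div_pow, div_pow, ← add_div, hn2, div_self (hpos j).ne']
  have hkb := key_bound N hN v hvK
  have hveq : (∑ j, (v j).2 * ∏ i ∈ Finset.univ.erase j, (v i).1)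
      = ∑ j, t j * ∏ i ∈ Finset.univ.erase j, u i := by
    refine Finset.sum_congr rfl fun j _ => ?_
    show (t j / n j) * ∏ i ∈ Finset.univ.erase j, (u i / n i) = _
    rw [Finset.prod_div_distrib, div_mul_div_comm]
    have hden : n j * ∏ i ∈ Finset.univ.erase j, n i = 1 := by
      rw [Finset.mul_prod_erase Finset.univ n (Finset.mem_univ j), hprodn]
    rw [hden, div_one]
  rw [hveq] at hkb
  set T : ℝ := ∑ j, t j * ∏ i ∈ Finset.univ.erase j, u i with hT
  have hT0 : 0 ≤ T := Finset.sum_nonneg fun j _ =>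
    mul_nonneg (ht0 j) (Finset.prod_nonneg fun i _ => hu0 i)
  -- bound the inner product norm
  have hqn : ‖qInner φ (Wstate N)‖ ≤ T * (Real.sqrt N)⁻¹ := by
    rw [qInner_W_eq]
    refine le_trans (norm_sum_le _ _) ?_
    have hterm : ∀ j : Fin N, ‖(starRingEnd ℂ) (φ (eW j)) * (1 / (Real.sqrt N : ℂ))‖
        = (t j * ∏ i ∈ Finset.univ.erase j, u i) * (Real.sqrt N)⁻¹ := by
      intro j
      rw [norm_mul, RCLike.norm_conj]
      have h1 : ‖φ (eW j)‖ = t j * ∏ i ∈ Finset.univ.erase j, u i := by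
        rw [hf (eW j), norm_prod, prod_eW (fun i b => ‖f i b‖) j]
      have h2 : ‖(1 / (Real.sqrt N : ℂ))‖ = (Real.sqrt N)⁻¹ := by
        rw [norm_div, norm_one, Complex.norm_real, Real.norm_eq_abs,
          abs_of_nonneg (Real.sqrt_nonneg _), one_div]
      rw [h1, h2]
    rw [Finset.sum_congr rfl fun j _ => hterm j, ← Finset.sum_mul, ← hT]
  have hsqrtpos : (0:ℝ) < Real.sqrt N := Real.sqrt_pos.2 hNpos
  have hq2 : ‖qInner φ (Wstate N)‖ ^ 2 ≤ T ^ 2 * ((N:ℝ))⁻¹ := by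
    calc ‖qInner φ (Wstate N)‖ ^ 2 ≤ (T * (Real.sqrt N)⁻¹) ^ 2 :=
          pow_le_pow_left₀ (norm_nonneg _) hqn 2
      _ = T ^ 2 * ((Real.sqrt N)⁻¹ * (Real.sqrt N)⁻¹) := by ring
      _ = T ^ 2 * ((N:ℝ))⁻¹ := by
          rw [← mul_inv, Real.mul_self_sqrt hNpos.le]
  calc ‖qInner φ (Wstate N)‖ ^ 2 ≤ T ^ 2 * ((N:ℝ))⁻¹ := hq2
    _ ≤ (N * (((N : ℝ) - 1) / N) ^ (N - 1)) * ((N:ℝ))⁻¹ := by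
        apply mul_le_mul_of_nonneg_right hkb (by positivity)
    _ = (((N : ℝ) - 1) / N) ^ (N - 1) := by
        field_simp

lemma overlap_attained (N : ℕ) (hN : 2 ≤ N) :
    ∃ φ : (Fin N → Bool) → ℂ, IsProductState φ ∧ IsNormalized φ ∧
      ‖qInner φ (Wstate N)‖ ^ 2 = (((N : ℝ) - 1) / N) ^ (N - 1) := by
  have hNpos : (0:ℝ) < N := by positivity
  have hN1 : (0:ℝ) ≤ (N:ℝ) - 1 := by
    have : (2:ℝ) ≤ N := by exact_mod_cast hN
    linarith
  set s : ℝ := Real.sqrt (((N:ℝ) - 1) / N) with hs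
  set g : Bool → ℝ := fun b => bif b then (Real.sqrt N)⁻¹ else s with hg
  set φ : (Fin N → Bool) → ℂ := fun x => ((∏ i, g (x i) : ℝ) : ℂ) with hφ
  have hg0 : ∀ b, 0 ≤ g b := by
    intro b
    cases b
    · exact Real.sqrt_nonneg _
    · exact inv_nonneg.2 (Real.sqrt_nonneg _)
  have hs2 : s ^ 2 = ((N:ℝ) - 1) / N := Real.sq_sqrt (by positivity)
  have hginv2 : ((Real.sqrt N)⁻¹) ^ 2 = (N:ℝ)⁻¹ := by
    rw [inv_pow, Real.sq_sqrt hNpos.le]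
  refine ⟨φ, ⟨fun i b => ((g b : ℝ) : ℂ), fun x => Complex.ofReal_prod _ _⟩, ?_, ?_⟩
  · -- normalized
    unfold IsNormalized
    have h1 : ∀ x : Fin N → Bool, ‖φ x‖ ^ 2 = ∏ i, (g (x i)) ^ 2 := by
      intro x
      rw [hφ, Complex.norm_real, Real.norm_eq_abs,
        abs_of_nonneg (Finset.prod_nonneg fun i _ => hg0 (x i)), ← Finset.prod_pow]
    rw [Finset.sum_congr rfl fun x _ => h1 x, sum_prod_bool (fun _ b => (g b) ^ 2)]
    have : (g false) ^ 2 + (g true) ^ 2 = 1 := by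
      show s ^ 2 + ((Real.sqrt N)⁻¹) ^ 2 = 1
      rw [hs2, hginv2]
      field_simp
      ring
    rw [Finset.prod_congr rfl fun i _ => this, Finset.prod_const_one]
  · -- the overlap value
    have hval : qInner φ (Wstate N) = ((s ^ (N - 1) : ℝ) : ℂ) := by
      rw [qInner_W_eq]
      have hφe : ∀ j : Fin N, φ (eW j) = (((Real.sqrt N)⁻¹ * s ^ (N - 1) : ℝ) : ℂ) := by
        intro j
        show ((∏ i, g (eW j i) : ℝ) : ℂ) = _
        congr 1
        rw [prod_eW (fun _ b => g b) j]
        show (Real.sqrt N)⁻¹ * (∏ _i ∈ Finset.univ.erase j, s) = _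
        rw [Finset.prod_const, Finset.card_erase_of_mem (Finset.mem_univ j), Finset.card_univ,
          Fintype.card_fin]
      have hterm : ∀ j : Fin N, (starRingEnd ℂ) (φ (eW j)) * (1 / (Real.sqrt N : ℂ))
          = ((((Real.sqrt N)⁻¹ * s ^ (N - 1)) * (Real.sqrt N)⁻¹ : ℝ) : ℂ) := by
        intro j
        rw [hφe j, Complex.conj_ofReal, one_div, ← Complex.ofReal_inv, ← Complex.ofReal_mul]
      rw [Finset.sum_congr rfl fun j _ => hterm j, Finset.sum_const, Finset.card_univ,
        Fintype.card_fin, nsmul_eq_mul, ← Complex.ofReal_natCast, ← Complex.ofReal_mul]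
      apply Complex.ofReal_inj.mpr
      have hsr : (Real.sqrt N)⁻¹ * (Real.sqrt N)⁻¹ = (N:ℝ)⁻¹ := by
        rw [← mul_inv, Real.mul_self_sqrt hNpos.le]
      calc (N:ℝ) * ((Real.sqrt N)⁻¹ * s ^ (N - 1) * (Real.sqrt N)⁻¹)
          = s ^ (N - 1) * ((N:ℝ) * ((Real.sqrt N)⁻¹ * (Real.sqrt N)⁻¹)) := by ring
        _ = s ^ (N - 1) := by rw [hsr, mul_inv_cancel₀ hNpos.ne', mul_one]
    rw [hval, Complex.norm_real, Real.norm_eq_abs,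
      abs_of_nonneg (pow_nonneg (Real.sqrt_nonneg _) _), ← pow_mul, mul_comm (N-1) 2, pow_mul,
      hs2]


/-- For `N ≥ 2`, the maximal product overlap of the W state is
`π(W_N) = ((N−1)/N)^(N−1)`, this supremum is attained by some normalized product
state, and the geometric measure of entanglement is
`E_g(W_N) = (N−1)·log₂(N/(N−1))`. -/
theorem W_state_geometric_measure (N : ℕ) (hN : 2 ≤ N) :
    maxOverlap (Wstate N) = (((N : ℝ) - 1) / N) ^ (N - 1) ∧
    (∃ φ : (Fin N → Bool) → ℂ, IsProductState φ ∧ IsNormalized φ ∧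
      ‖qInner φ (Wstate N)‖ ^ 2 = maxOverlap (Wstate N)) ∧
    geomMeasure (Wstate N) = ((N : ℝ) - 1) * Real.logb 2 ((N : ℝ) / ((N : ℝ) - 1)) := by
  obtain ⟨φ₀, hp₀, hn₀, hv₀⟩ := overlap_attained N hN
  have hsup : maxOverlap (Wstate N) = (((N : ℝ) - 1) / N) ^ (N - 1) := by
    unfold maxOverlap
    apply IsGreatest.csSup_eq
    constructor
    · exact ⟨φ₀, hp₀, hn₀, hv₀.symm⟩
    · rintro r ⟨φ, hp, hn, rfl⟩
      exact overlap_le N hN φ hp hn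
  refine ⟨hsup, ⟨φ₀, hp₀, hn₀, by rw [hsup, hv₀]⟩, ?_⟩
  unfold geomMeasure
  rw [hsup, Real.logb_pow]
  have h1 : ((N:ℝ) - 1) / N = ((N:ℝ) / ((N:ℝ) - 1))⁻¹ := by rw [inv_div]
  rw [h1, Real.logb_inv]
  have h2 : ((N - 1 : ℕ) : ℝ) = (N:ℝ) - 1 := by
    rw [Nat.cast_sub (by omega : 1 ≤ N)]
    norm_num
  rw [h2]
  ring
end
end

section
/- For every natural number N ≥ 2 there exists a product state φ on N qubits with Σ_x ‖φ x‖² = 1 and ‖⟨φ, W_N⟩‖² ≥ 1/e; consequently π(W_N) ≥ 1/e and the geometric measure satisfies E_g(W_N) ≤ log₂ e = 1/ln 2 for all N, i.e., the geometric measure of entanglement is uniformly bounded on the family of W states. -/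
open scoped BigOperators Classical

noncomputable section

/- ## Auxiliary lemmas -/

lemma key_ineq (N : ℕ) (hN : 2 ≤ N) :
    1 / Real.exp 1 ≤ (1 - 1/(N:ℝ))^(N-1) := by
  obtain ⟨m, rfl⟩ : ∃ m, N = m + 1 := ⟨N - 1, by omega⟩
  have hm : 1 ≤ m := by omega
  have hm0 : (0:ℝ) < m := by exact_mod_cast hm.trans_lt' (by norm_num)
  have hbase : (1 - 1/((m:ℝ)+1)) = ((1 + 1/(m:ℝ)))⁻¹ := by
    field_simp
    ring
  have h1 : (1 + 1/(m:ℝ)) ≤ Real.exp (1/m) := by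
    have := Real.add_one_le_exp (1/(m:ℝ))
    linarith
  have h2 : (1 + 1/(m:ℝ))^m ≤ Real.exp 1 := by
    calc (1 + 1/(m:ℝ))^m ≤ (Real.exp (1/m))^m := by
          apply pow_le_pow_left₀ (by positivity) h1
      _ = Real.exp 1 := by
          rw [← Real.exp_nat_mul]
          congr 1
          field_simp
  have hpos : (0:ℝ) < (1 + 1/(m:ℝ))^m := by positivity
  have hfin : 1 / Real.exp 1 ≤ 1 / (1 + 1/(m:ℝ))^m :=
    one_div_le_one_div_of_le hpos h2
  calc 1 / Real.exp 1 ≤ 1 / (1 + 1/(m:ℝ))^m := hfin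
    _ = (1 - 1/((m:ℝ)+1))^m := by rw [hbase, inv_pow, one_div]
    _ = (1 - 1/(↑(m+1):ℝ))^(m+1-1) := by push_cast; norm_num

/-- The candidate product state approximating the W state. -/
def myphi (N : ℕ) : (Fin N → Bool) → ℂ :=
  fun x => ∏ i, (if x i then ((1 / Real.sqrt N : ℝ) : ℂ) else ((Real.sqrt (1 - 1/N) : ℝ) : ℂ))

lemma myphi_normalized (N : ℕ) (hN : 2 ≤ N) : ∑ x : Fin N → Bool, ‖myphi N x‖ ^ 2 = 1 := by
  have hN0 : (0:ℝ) < N := by exact_mod_cast by omega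
  have hc : (0:ℝ) ≤ 1 - 1/N := by
    rw [sub_nonneg, div_le_one hN0]; exact_mod_cast by omega
  have key := Finset.prod_univ_sum (fun _ : Fin N => (Finset.univ : Finset Bool))
    (fun i b => ‖(if b then ((1 / Real.sqrt N : ℝ) : ℂ) else ((Real.sqrt (1 - 1/N) : ℝ) : ℂ))‖ ^ 2)
  rw [Fintype.piFinset_univ] at key
  have h2 : ∀ x : Fin N → Bool, ‖myphi N x‖ ^ 2
      = ∏ i, ‖(if x i then ((1 / Real.sqrt N : ℝ) : ℂ) else ((Real.sqrt (1 - 1/N) : ℝ) : ℂ))‖ ^ 2 := by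
    intro x
    rw [myphi, norm_prod, ← Finset.prod_pow]
  have hsum : (∑ b : Bool, ‖(if b then ((1 / Real.sqrt N : ℝ) : ℂ) else ((Real.sqrt (1 - 1/N) : ℝ) : ℂ))‖ ^ 2) = 1 := by
    rw [Fintype.sum_bool, if_pos rfl, if_neg Bool.false_ne_true,
      Complex.norm_real, Complex.norm_real, Real.norm_eq_abs, Real.norm_eq_abs, sq_abs, sq_abs,
      Real.sq_sqrt hc, div_pow, one_pow, Real.sq_sqrt hN0.le]
    field_simp
    ring
  calc ∑ x : Fin N → Bool, ‖myphi N x‖ ^ 2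
      = ∑ x : Fin N → Bool, ∏ i, ‖(if x i then ((1 / Real.sqrt N : ℝ) : ℂ) else ((Real.sqrt (1 - 1/N) : ℝ) : ℂ))‖ ^ 2 :=
        Finset.sum_congr rfl (fun x _ => h2 x)
    _ = ∏ i : Fin N, (∑ b : Bool, ‖(if b then ((1 / Real.sqrt N : ℝ) : ℂ) else ((Real.sqrt (1 - 1/N) : ℝ) : ℂ))‖ ^ 2) := key.symm
    _ = ∏ i : Fin N, (1:ℝ) := Finset.prod_congr rfl (fun i _ => hsum)
    _ = 1 := Finset.prod_const_one

lemma filter_eq_image (N : ℕ) :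
    (Finset.univ.filter fun x : Fin N → Bool => (Finset.univ.filter fun i => x i = true).card = 1)
      = Finset.image (fun i : Fin N => (fun j => decide (j = i))) Finset.univ := by
  ext x
  simp only [Finset.mem_filter, Finset.mem_univ, true_and, Finset.mem_image]
  constructor
  · intro hx
    obtain ⟨a, ha⟩ := Finset.card_eq_one.mp hx
    refine ⟨a, ?_⟩
    funext j
    have hj : x j = true ↔ j = a := by
      have := Finset.ext_iff.mp ha j
      simpa using this
    cases hxj : x j with
    | true => simp [hj.mp hxj]
    | false =>
        have h2 : ¬ j = a := fun h => by simp [hj.mpr h] at hxj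
        simp [h2]
  · rintro ⟨i, rfl⟩
    have h3 : (Finset.univ.filter fun j : Fin N => decide (j = i) = true) = {i} := by
      ext j; simp
    rw [h3, Finset.card_singleton]

lemma evec_inj (N : ℕ) : Function.Injective (fun i : Fin N => (fun j => decide (j = i) : Fin N → Bool)) := by
  intro i i' h
  simpa using congrFun h i

lemma myphi_evec (N : ℕ) (i : Fin N) :
    myphi N (fun j => decide (j = i))
      = ((1 / Real.sqrt N : ℝ) : ℂ) * ((Real.sqrt (1 - 1/N) : ℝ) : ℂ)^(N-1) := by
  rw [myphi, ← Finset.mul_prod_erase _ _ (Finset.mem_univ i)]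
  congr 1
  · simp
  · rw [Finset.prod_congr rfl (fun j hj => ?_), Finset.prod_const,
      Finset.card_erase_of_mem (Finset.mem_univ i), Finset.card_univ, Fintype.card_fin]
    have h2 : ¬ (j = i) := (Finset.mem_erase.mp hj).1
    simp [h2]

lemma myphi_inner (N : ℕ) (hN : 2 ≤ N) :
    qInner (myphi N) (Wstate N) = ((Real.sqrt (1 - 1/N) ^ (N-1) : ℝ) : ℂ) := by
  have hN0 : (0:ℝ) < N := by exact_mod_cast by omega
  have hconj : ∀ x, (starRingEnd ℂ) (myphi N x) = myphi N x := by
    intro x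
    rw [myphi, map_prod]
    refine Finset.prod_congr rfl (fun i _ => ?_)
    rw [apply_ite (starRingEnd ℂ), Complex.conj_ofReal, Complex.conj_ofReal]
  rw [qInner]
  simp only [hconj, Wstate, mul_ite, mul_zero, mul_one]
  rw [← Finset.sum_filter, filter_eq_image, Finset.sum_image (fun a _ b _ h => evec_inj N h)]
  have hterm : ∀ i : Fin N, myphi N (fun j => decide (j = i)) * (1 / (Real.sqrt N : ℂ))
      = (((1 / Real.sqrt N) * (Real.sqrt (1 - 1/N))^(N-1) * (1 / Real.sqrt N) : ℝ) : ℂ) := by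
    intro i
    rw [myphi_evec]
    push_cast
    ring
  rw [Finset.sum_congr rfl (fun i _ => hterm i), Finset.sum_const, Finset.card_univ, Fintype.card_fin]
  rw [nsmul_eq_mul]
  have hreal : (N:ℝ) * ((1 / Real.sqrt N) * (Real.sqrt (1 - 1/N))^(N-1) * (1 / Real.sqrt N))
      = Real.sqrt (1 - 1/N) ^ (N-1) := by
    have h2 : (1 / Real.sqrt N) * (1 / Real.sqrt N) = 1 / (N:ℝ) := by
      rw [div_mul_div_comm, one_mul, Real.mul_self_sqrt hN0.le]
    calc (N:ℝ) * ((1 / Real.sqrt N) * (Real.sqrt (1 - 1/N))^(N-1) * (1 / Real.sqrt N))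
        = (N:ℝ) * ((1 / Real.sqrt N) * (1 / Real.sqrt N)) * (Real.sqrt (1 - 1/N))^(N-1) := by ring
      _ = (N:ℝ) * (1 / N) * (Real.sqrt (1 - 1/N))^(N-1) := by rw [h2]
      _ = (Real.sqrt (1 - 1/N))^(N-1) := by field_simp
  calc (N:ℂ) * (((1 / Real.sqrt N) * (Real.sqrt (1 - 1/N))^(N-1) * (1 / Real.sqrt N) : ℝ) : ℂ)
      = (((N:ℝ) * ((1 / Real.sqrt N) * (Real.sqrt (1 - 1/N))^(N-1) * (1 / Real.sqrt N)) : ℝ) : ℂ) := by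
        push_cast; ring
    _ = _ := by rw [hreal]

/-- For every `N ≥ 2` there is a normalized product state `φ` with
`‖⟨φ, W_N⟩‖² ≥ 1/e`; consequently `π(W_N) ≥ 1/e` and the geometric measure
satisfies `E_g(W_N) ≤ log₂ e = 1/ln 2` for all `N`: the geometric measure of
entanglement is uniformly bounded on the family of W states. -/
theorem W_state_geometric_measure_bounded (N : ℕ) (hN : 2 ≤ N) :
    (∃ φ : (Fin N → Bool) → ℂ, IsProductState φ ∧ IsNormalized φ ∧
      1 / Real.exp 1 ≤ ‖qInner φ (Wstate N)‖ ^ 2) ∧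
    1 / Real.exp 1 ≤ maxOverlap (Wstate N) ∧
    geomMeasure (Wstate N) ≤ Real.logb 2 (Real.exp 1) ∧
    Real.logb 2 (Real.exp 1) = 1 / Real.log 2 := by
  have hN0 : (0:ℝ) < N := by exact_mod_cast by omega
  have hc : (0:ℝ) ≤ 1 - 1/N := by
    rw [sub_nonneg, div_le_one hN0]; exact_mod_cast by omega
  have hover : ‖qInner (myphi N) (Wstate N)‖ ^ 2 = (1 - 1/(N:ℝ))^(N-1) := by
    rw [myphi_inner N hN, Complex.norm_real, Real.norm_eq_abs, sq_abs, ← pow_mul,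
      mul_comm, pow_mul, Real.sq_sqrt hc]
  have hprod : IsProductState (myphi N) :=
    ⟨fun _ b => if b then ((1 / Real.sqrt N : ℝ) : ℂ) else ((Real.sqrt (1 - 1/N) : ℝ) : ℂ),
      fun x => rfl⟩
  have hnorm : IsNormalized (myphi N) := myphi_normalized N hN
  have hge : 1 / Real.exp 1 ≤ ‖qInner (myphi N) (Wstate N)‖ ^ 2 := by
    rw [hover]; exact key_ineq N hN
  have hexists : ∃ φ : (Fin N → Bool) → ℂ, IsProductState φ ∧ IsNormalized φ ∧
      1 / Real.exp 1 ≤ ‖qInner φ (Wstate N)‖ ^ 2 := ⟨myphi N, hprod, hnorm, hge⟩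
  have hbdd : BddAbove { r : ℝ | ∃ φ : (Fin N → Bool) → ℂ,
      IsProductState φ ∧ IsNormalized φ ∧ r = ‖qInner φ (Wstate N)‖ ^ 2 } := by
    refine ⟨∑ x : Fin N → Bool, ‖Wstate N x‖ ^ 2, ?_⟩
    rintro r ⟨φ, -, hnφ, rfl⟩
    rw [IsNormalized] at hnφ
    have h1 : ‖qInner φ (Wstate N)‖ ≤ ∑ x : Fin N → Bool, ‖φ x‖ * ‖Wstate N x‖ := by
      refine (norm_sum_le _ _).trans (le_of_eq ?_)
      refine Finset.sum_congr rfl (fun x _ => ?_)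
      rw [norm_mul, RCLike.norm_conj]
    calc ‖qInner φ (Wstate N)‖ ^ 2
        ≤ (∑ x : Fin N → Bool, ‖φ x‖ * ‖Wstate N x‖) ^ 2 :=
          pow_le_pow_left₀ (norm_nonneg _) h1 2
      _ ≤ (∑ x : Fin N → Bool, ‖φ x‖ ^ 2) * (∑ x : Fin N → Bool, ‖Wstate N x‖ ^ 2) :=
          Finset.sum_mul_sq_le_sq_mul_sq _ _ _
      _ = ∑ x : Fin N → Bool, ‖Wstate N x‖ ^ 2 := by rw [hnφ, one_mul]
  have hmo : 1 / Real.exp 1 ≤ maxOverlap (Wstate N) := by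
    have hmem : ‖qInner (myphi N) (Wstate N)‖ ^ 2 ∈ { r : ℝ | ∃ φ : (Fin N → Bool) → ℂ,
        IsProductState φ ∧ IsNormalized φ ∧ r = ‖qInner φ (Wstate N)‖ ^ 2 } :=
      ⟨myphi N, hprod, hnorm, rfl⟩
    exact hge.trans (le_csSup hbdd hmem)
  have hpos : 0 < maxOverlap (Wstate N) := lt_of_lt_of_le (by positivity) hmo
  refine ⟨hexists, hmo, ?_, by rw [Real.logb, Real.log_exp, one_div]⟩
  rw [geomMeasure, neg_le, ← Real.logb_inv]
  rw [Real.logb_le_logb (by norm_num) (by positivity) hpos]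
  rw [← one_div]
  exact hmo
end
end

section
/- For every n ≥ 2, the minimal number K of n-qubit product states α_1, …, α_K such that GHZ_n = Σ_{i=1}^K a_i · α_i for some complex coefficients a_i equals 2; i.e., the Schmidt measure of the GHZ state is E_s(GHZ_n) = 1 for every n ≥ 2. In particular, GHZ_n is a sum of two product states but is not itself a product state. -/
open scoped BigOperators Classical

noncomputable section

/-- The set of natural numbers `K` such that `ψ` can be written as a linear
combination `ψ = Σ_{i=1}^K a_i · α_i` of `K` product states with complex
coefficients. -/
def schmidtSet {n : ℕ} (ψ : (Fin n → Bool) → ℂ) : Set ℕ :=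
  { K | ∃ (a : Fin K → ℂ) (α : Fin K → (Fin n → Bool) → ℂ),
      (∀ i, IsProductState (α i)) ∧ ∀ x, ψ x = ∑ i, a i * α i x }

/-- The minimal number `K` of product states needed to write `ψ` as a linear
combination of product states. -/
def schmidtNumber {n : ℕ} (ψ : (Fin n → Bool) → ℂ) : ℕ :=
  sInf (schmidtSet ψ)

/-- The Schmidt measure `E_s(ψ) = log₂ K`, with `K` minimal as above. -/
def schmidtMeasure {n : ℕ} (ψ : (Fin n → Bool) → ℂ) : ℝ :=
  Real.logb 2 (schmidtNumber ψ)

/-- The `n`-qubit GHZ state: amplitude `1/√2` on each of the two constant strings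
and `0` elsewhere. -/
def GHZ (n : ℕ) : (Fin n → Bool) → ℂ :=
  fun x => if (∀ i, x i = false) ∨ (∀ i, x i = true)
    then 1 / (Real.sqrt 2 : ℂ) else 0

lemma sqrt2_inv_ne_zero : (1 / (Real.sqrt 2 : ℂ)) ≠ 0 :=
  one_div_ne_zero (Complex.ofReal_ne_zero.mpr
    (ne_of_gt (Real.sqrt_pos.mpr (by norm_num))))

lemma ghz_const_false {n : ℕ} : GHZ n (fun _ => false) = 1 / (Real.sqrt 2 : ℂ) := by
  simp [GHZ]

lemma ghz_const_true {n : ℕ} : GHZ n (fun _ => true) = 1 / (Real.sqrt 2 : ℂ) := by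
  simp [GHZ]

lemma prod_delta {n : ℕ} (x : Fin n → Bool) (b : Bool) :
    (∏ j, (if x j = b then (1:ℂ) else 0)) = if (∀ j, x j = b) then 1 else 0 := by
  by_cases h : ∀ j, x j = b
  · simp [h]
  · rw [if_neg h]
    push_neg at h
    obtain ⟨j, hj⟩ := h
    exact Finset.prod_eq_zero (Finset.mem_univ j) (by simp [hj])

lemma ghz_not_prod {n : ℕ} (hn : 2 ≤ n) (g : Fin n → Bool → ℂ)
    (h : ∀ x, GHZ n x = ∏ i, g i (x i)) : False := by
  have hf : ∀ i, g i false ≠ 0 := by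
    have h0 := h (fun _ => false)
    rw [ghz_const_false] at h0
    have hp : (∏ i, g i false) ≠ 0 := h0 ▸ sqrt2_inv_ne_zero
    intro i
    exact Finset.prod_ne_zero_iff.mp hp i (Finset.mem_univ i)
  have ht : ∀ i, g i true ≠ 0 := by
    have h1 := h (fun _ => true)
    rw [ghz_const_true] at h1
    have hp : (∏ i, g i true) ≠ 0 := h1 ▸ sqrt2_inv_ne_zero
    intro i
    exact Finset.prod_ne_zero_iff.mp hp i (Finset.mem_univ i)
  set i0 : Fin n := ⟨0, by omega⟩
  set i1 : Fin n := ⟨1, by omega⟩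
  set y : Fin n → Bool := fun j => if j = i0 then true else false with hy
  have hGHZy : GHZ n y = 0 := by
    rw [GHZ, if_neg]
    rintro (hc | hc)
    · have := hc i0; simp [hy] at this
    · have := hc i1
      have hne : i1 ≠ i0 := by simp [i0, i1, Fin.ext_iff]
      simp [hy, hne] at this
  have := h y
  rw [hGHZy] at this
  have hp : (∏ i, g i (y i)) ≠ 0 := by
    rw [Finset.prod_ne_zero_iff]
    intro i _
    cases hyi : y i
    · simpa [hyi] using hf i
    · simpa [hyi] using ht i
  exact hp this.symm

lemma ghz_mem_two {n : ℕ} (hn : 2 ≤ n) : 2 ∈ schmidtSet (GHZ n) := by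
  refine ⟨fun _ => 1 / (Real.sqrt 2 : ℂ),
    fun i x => ∏ j, (if x j = (![false, true] i) then (1:ℂ) else 0), ?_, ?_⟩
  · intro i
    exact ⟨fun j c => if c = (![false, true] i) then 1 else 0, fun x => rfl⟩
  · intro x
    have hne : ¬ ((∀ j, x j = false) ∧ (∀ j, x j = true)) := by
      rintro ⟨h0, h1⟩
      have := (h0 ⟨0, by omega⟩).symm.trans (h1 ⟨0, by omega⟩)
      simp at this
    rw [Fin.sum_univ_two]
    simp only [Matrix.cons_val_zero, Matrix.cons_val_one, Matrix.head_cons, prod_delta]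
    by_cases h0 : ∀ j, x j = false
    · have h1 : ¬ ∀ j, x j = true := fun h1 => hne ⟨h0, h1⟩
      simp [GHZ, h0, h1]
      exact fun h => by omega
    · by_cases h1 : ∀ j, x j = true
      · simp [GHZ, h0, h1]
        exact fun h => by omega
      · simp [GHZ, h0, h1]
        push_neg at h0 h1
        obtain ⟨j0, hj0⟩ := h0
        obtain ⟨j1, hj1⟩ := h1
        rw [Finset.prod_eq_zero (Finset.mem_univ j0) (by simp [hj0]),
          Finset.prod_eq_zero (Finset.mem_univ j1) (by simp [hj1])]
        simp

/-- For every `n ≥ 2`, the minimal number `K` of `n`-qubit product states whose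
linear span contains `GHZ_n` equals `2`, i.e. the Schmidt measure of the GHZ state
is `E_s(GHZ_n) = 1`.  In particular, `GHZ_n` is a sum of two product states but is
not itself a product state. -/
theorem GHZ_schmidtMeasure (n : ℕ) (hn : 2 ≤ n) :
    schmidtNumber (GHZ n) = 2 ∧ schmidtMeasure (GHZ n) = 1 ∧
    2 ∈ schmidtSet (GHZ n) ∧ ¬ IsProductState (GHZ n) := by
  have h2 := ghz_mem_two hn
  have hnotprod : ¬ IsProductState (GHZ n) := by
    rintro ⟨f, hf⟩
    exact ghz_not_prod hn f hf
  have h0 : 0 ∉ schmidtSet (GHZ n) := by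
    rintro ⟨a, α, -, hsum⟩
    have := hsum (fun _ => false)
    rw [ghz_const_false] at this
    simp at this
  have h1 : 1 ∉ schmidtSet (GHZ n) := by
    rintro ⟨a, α, hp, hsum⟩
    obtain ⟨f, hf⟩ := hp 0
    set i0 : Fin n := ⟨0, by omega⟩
    apply ghz_not_prod hn (fun i b => (if i = i0 then a 0 else 1) * f i b)
    intro x
    rw [hsum x, Fin.sum_univ_one, hf x, Finset.prod_mul_distrib]
    congr 1
    simp
  have hnum : schmidtNumber (GHZ n) = 2 := by
    have hle : sInf (schmidtSet (GHZ n)) ≤ 2 := Nat.sInf_le h2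
    have hmem : sInf (schmidtSet (GHZ n)) ∈ schmidtSet (GHZ n) :=
      Nat.sInf_mem ⟨2, h2⟩
    have hne0 : sInf (schmidtSet (GHZ n)) ≠ 0 := fun h => h0 (h ▸ hmem)
    have hne1 : sInf (schmidtSet (GHZ n)) ≠ 1 := fun h => h1 (h ▸ hmem)
    unfold schmidtNumber
    omega
  refine ⟨hnum, ?_, h2, hnotprod⟩
  rw [schmidtMeasure, hnum]
  norm_num [Real.logb_self_eq_one]
end
end
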